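/- In the free group F_2 on generators a and b, the subgroup generated by {a, b⁻¹·a·b·a⁻¹·b} is not equal to the subgroup generated by {a·b⁻¹·a·b·a⁻¹, b}. -/
import Mathlib

theorem stmt6 :
    let a : FreeGroup (Fin 2) := FreeGroup.of 0
    let b : FreeGroup (Fin 2) := FreeGroup.of 1
    Subgroup.closure {a, b⁻¹ * a * b * a⁻¹ * b} ≠
      Subgroup.closure {a * b⁻¹ * a * b * a⁻¹, b} := by
  intro a b h
  set φ : FreeGroup (Fin 2) →* Equiv.Perm (Fin 3) :=
    FreeGroup.lift ![Equiv.swap 1 2, Equiv.swap 0 1] with hφ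
  have hK : Subgroup.closure {a, b⁻¹ * a * b * a⁻¹ * b} ≤
      (MulAction.stabilizer (Equiv.Perm (Fin 3)) (0 : Fin 3)).comap φ := by
    rw [Subgroup.closure_le]
    intro x hx
    rcases hx with rfl | rfl <;>
      simp only [SetLike.mem_coe, Subgroup.mem_comap, Equiv.Perm.smul_def, MulAction.mem_stabilizer_iff, hφ, map_mul, map_inv,
        FreeGroup.lift_apply_of, a, b] <;> decide
  have hb : b ∈ Subgroup.closure {a * b⁻¹ * a * b * a⁻¹, b} :=
    Subgroup.subset_closure (by simp)
  rw [← h] at hb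
  have := hK hb
  simp only [Subgroup.mem_comap, MulAction.mem_stabilizer_iff, Equiv.Perm.smul_def, hφ, FreeGroup.lift_apply_of, b] at this
  exact absurd this (by decide)
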